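/- Let n ≥ 2 and let t be a full binary tree with n+1 leaves. If the Loday vector M_n(t) is the vector of a permutation of {1,…,n}, then at least one of the two children of the root of t is a leaf (i.e., the left subtree of t consists of the single leaf 0, or the right subtree of t consists of the single leaf n). -/
import Mathlib


/-- Full binary trees: every internal vertex has exactly two children. -/
inductive BTree : Type
  | leaf : BTree
  | node : BTree → BTree → BTree

/-- Number of leaves of a full binary tree. -/
def BTree.leaves : BTree → ℕ
  | .leaf => 1
  | .node l r => l.leaves + r.leaves

/-- The list of weights `a_i * b_i` of the internal vertices of `t`, in left-to-right
(infix) order: the `i`-th entry corresponds to the internal vertex between leaves `i-1` and `i`. -/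
def BTree.loday : BTree → List ℕ
  | .leaf => []
  | .node l r => l.loday ++ (l.leaves * r.leaves) :: r.loday

/-- Loday's vector `M_n(t) ∈ ℝ^n` of a full binary tree `t` with `n+1` leaves. -/
def lodayVec (t : BTree) (n : ℕ) : Fin n → ℝ :=
  fun i => ((t.loday.getD i 0 : ℕ) : ℝ)

/-- The vector `(σ(1), …, σ(n)) ∈ ℝ^n` of a permutation of `{1, …, n}`
(a permutation of `Fin n` with values shifted by one so that they lie in `{1, …, n}`). -/
def permVec {n : ℕ} (σ : Equiv.Perm (Fin n)) : Fin n → ℝ :=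
  fun i => ((σ i : ℕ) + 1 : ℝ)

lemma BTree.leaves_pos (t : BTree) : 1 ≤ t.leaves := by
  induction t with
  | leaf => simp [BTree.leaves]
  | node l r hl hr => simp [BTree.leaves]; omega

lemma BTree.loday_length (t : BTree) : t.loday.length + 1 = t.leaves := by
  induction t with
  | leaf => rfl
  | node l r hl hr => simp [BTree.loday, BTree.leaves]; omega

lemma BTree.leaf_of_leaves_one (t : BTree) (h : t.leaves = 1) : t = BTree.leaf := by
  cases t with
  | leaf => rfl
  | node l r =>
    exfalso
    have := l.leaves_pos; have := r.leaves_pos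
    simp [BTree.leaves] at h
    omega

/-- For `n ≥ 2`, if the Loday vector of a full binary tree with `n+1`
leaves is the vector of a permutation of `{1, …, n}`, then at least one of the two children
of the root is a leaf. -/
theorem root_child_is_leaf (n : ℕ) (hn : 2 ≤ n) (l r : BTree)
    (hleaves : (BTree.node l r).leaves = n + 1)
    (hperm : ∃ σ : Equiv.Perm (Fin n), lodayVec (BTree.node l r) n = permVec σ) :
    l = BTree.leaf ∨ r = BTree.leaf := by
  obtain ⟨σ, hσ⟩ := hperm
  have hl1 := l.leaves_pos
  have hr1 := r.leaves_pos
  have hllen := l.loday_length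
  simp [BTree.leaves] at hleaves
  have hi : l.loday.length < n := by omega
  have key : (lodayVec (BTree.node l r) n ⟨l.loday.length, hi⟩ : ℝ)
      = ((l.leaves * r.leaves : ℕ) : ℝ) := by
    simp [lodayVec, BTree.loday, List.getD, List.getElem?_append_right, List.getElem_append_right, Nat.sub_self]
  rw [hσ] at key
  have hσlt : (σ ⟨l.loday.length, hi⟩ : ℕ) + 1 ≤ n := (σ _).isLt
  have hnat : l.leaves * r.leaves = (σ ⟨l.loday.length, hi⟩ : ℕ) + 1 := by
    have := key
    simp [permVec] at this
    exact_mod_cast this.symm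
  have hle : l.leaves * r.leaves ≤ n := by omega
  rcases Nat.lt_or_ge l.leaves 2 with h | h
  · left; exact l.leaf_of_leaves_one (by omega)
  rcases Nat.lt_or_ge r.leaves 2 with h' | h'
  · right; exact r.leaf_of_leaves_one (by omega)
  exfalso
  have : l.leaves + r.leaves ≤ l.leaves * r.leaves := Nat.add_le_mul h h'
  omega
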